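/- Let q be a prime power, m a positive integer, θ : F_{q^m} → M_m(F_q) an injective F_q-algebra homomorphism, and γ a primitive element of F_{q^m} (an element of multiplicative order q^m−1). Let a and b be nonnegative integers such that a·q^e ≢ b·q^h (mod q^m−1) for all e, h ∈ {0, 1, …, m−1}. Then the m²×m² matrix θ(γ^{−b}) ⊗ θ(γ^{a}) − I_{m²} over F_q is invertible (equivalently, 1 is not an eigenvalue of θ(γ^{−b}) ⊗ θ(γ^{a})). -/

import Mathlib

/-! If `1` were an eigenvalue of `θ(γ⁻ᵇ) ⊗ θ(γᵃ)`, an eigenvector, read as a nonzero matrix `X`,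
would satisfy `θ(γᵃ) X = X θ(γᵇ)ᵀ`. Then `X` intertwines polynomials in the two matrices, so the
minimal polynomial of `γᵇ` over `F` must vanish at `γᵃ`: `γᵃ` is a Frobenius conjugate `γ^(b qʰ)`,
i.e. `a ≡ b qʰ (mod q^m - 1)`, contrary to the hypothesis. -/

open Matrix Kronecker Polynomial

theorem SemiconjBy.aeval {R A : Type*} [CommSemiring R] [Semiring A] [Algebra R A]
    {x c d : A} (h : SemiconjBy x c d) (p : R[X]) :
    SemiconjBy x (aeval c p) (aeval d p) := by
  induction p using Polynomial.induction_on' with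
  | add p q hp hq => simpa only [map_add] using hp.add_right hq
  | monomial n r =>
    simp only [aeval_monomial]
    exact SemiconjBy.mul_right (Algebra.commute_algebraMap_right r x) (h.pow_right n)

theorem Matrix.aeval_transpose {n R : Type*} [Fintype n] [DecidableEq n] [CommRing R]
    (M : Matrix n n R) (p : R[X]) : aeval Mᵀ p = (aeval M p)ᵀ :=
  MulOpposite.op_injective <| by
    rw [← aeval_op_apply]
    exact aeval_algHom_apply (transposeAlgEquiv n R R) M p

theorem Matrix.exists_ne_zero_mul_mul_transpose_eq_of_not_isUnit_kronecker_sub_one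
    {m n K : Type*} [Fintype m] [Fintype n] [DecidableEq m] [DecidableEq n] [Field K]
    {A : Matrix m m K} {B : Matrix n n K} (h : ¬ IsUnit (B ⊗ₖ A - 1)) :
    ∃ X : Matrix m n K, X ≠ 0 ∧ A * X * Bᵀ = X := by
  rw [isUnit_iff_isUnit_det, isUnit_iff_ne_zero, not_not, ← exists_mulVec_eq_zero_iff] at h
  obtain ⟨v, hv0, hv⟩ := h
  obtain ⟨X, rfl⟩ := vec_bijective.2 v
  refine ⟨X, fun hX => hv0 (by rw [hX, vec_zero]), vec_inj.1 ?_⟩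
  rwa [sub_mulVec, one_mulVec, sub_eq_zero, kronecker_mulVec_vec] at hv

theorem AlgHom.aeval_minpoly_eq_zero_of_mul_eq_mul_transpose {F E n : Type*} [CommRing F]
    [Field E] [Algebra F E] [Fintype n] [DecidableEq n] (θ : E →ₐ[F] Matrix n n F)
    {α β : E} {X : Matrix n n F} (hX : X ≠ 0) (h : θ α * X = X * (θ β)ᵀ) :
    aeval α (minpoly F β) = 0 := by
  have hsemi : X * _ = _ * X := SemiconjBy.aeval h.symm (minpoly F β)
  rw [aeval_transpose, aeval_algHom_apply, aeval_algHom_apply, minpoly.aeval, map_zero,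
    transpose_zero, mul_zero] at hsemi
  by_contra hne
  exact hX (((isUnit_iff_ne_zero.2 hne).map θ).mul_right_eq_zero.1 hsemi.symm)

theorem FiniteField.exists_eq_pow_card_pow_of_aeval_minpoly {K L : Type*} [Field K] [Fintype K]
    [Field L] [Finite L] [Algebra K L] {x y : L} (h : aeval y (minpoly K x) = 0) :
    ∃ n < Module.finrank K L, y = x ^ Fintype.card K ^ n := by
  have hmin : minpoly K y = minpoly K x :=
    (minpoly.eq_of_irreducible_of_monic (minpoly.irreducible (Algebra.IsIntegral.isIntegral x)) h
      (minpoly.monic (Algebra.IsIntegral.isIntegral x))).symm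
  obtain ⟨σ, rfl⟩ := (Normal.minpoly_eq_iff_mem_orbit L).1 hmin
  obtain ⟨n, rfl⟩ := (bijective_frobeniusAlgEquivOfAlgebraic_pow K L).2 σ
  refine ⟨n, n.2, ?_⟩
  change (frobeniusAlgEquivOfAlgebraic K L ^ (n : ℕ)) x = _
  rw [AlgEquiv.coe_pow, coe_frobeniusAlgEquivOfAlgebraic_iterate]

theorem stmt11_general (q m : ℕ)
    (F E : Type*) [Field F] [Field E] [Fintype F] [Fintype E] [Algebra F E]
    (hF : Fintype.card F = q) (hE : Fintype.card E = q ^ m)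
    (θ : E →ₐ[F] Matrix (Fin m) (Fin m) F)
    (γ : E) (hγ : orderOf γ = q ^ m - 1)
    (a b : ℕ)
    (hab : ∀ e h : ℕ, e < m → h < m →
      ¬ (a * q ^ e ≡ b * q ^ h [MOD q ^ m - 1])) :
    IsUnit (θ (γ⁻¹ ^ b) ⊗ₖ θ (γ ^ a) - 1) := by
  by_contra h
  obtain ⟨X, hX0, hX⟩ := exists_ne_zero_mul_mul_transpose_eq_of_not_isUnit_kronecker_sub_one h
  have hq : 1 < q := hF ▸ Fintype.one_lt_card
  have hfinrank : Module.finrank F E = m := Nat.pow_right_injective hq <|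
    show q ^ _ = q ^ m by rw [← hE, Module.card_eq_pow_finrank (K := F), hF]
  have hγfin : IsOfFinOrder γ :=
    orderOf_pos_iff.1 (hγ ▸ Nat.sub_pos_of_lt (hE ▸ Fintype.one_lt_card))
  have hθγ : θ (γ ^ b) * θ (γ⁻¹ ^ b) = 1 := by
    rw [← map_mul, inv_pow, mul_inv_cancel₀ (pow_ne_zero b hγfin.isUnit.ne_zero), map_one]
  have hsemi : θ (γ ^ a) * X = X * (θ (γ ^ b))ᵀ := by
    conv_rhs => rw [← hX]
    rw [mul_assoc _ _ (θ (γ ^ b))ᵀ, ← transpose_mul, hθγ, transpose_one, mul_one]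
  obtain ⟨n, hn, hpow⟩ := FiniteField.exists_eq_pow_card_pow_of_aeval_minpoly
    (θ.aeval_minpoly_eq_zero_of_mul_eq_mul_transpose hX0 hsemi)
  rw [hF, ← pow_mul, hγfin.pow_eq_pow_iff_modEq, hγ] at hpow
  exact hab 0 n (by omega) (by omega) (by simpa using hpow)

theorem stmt11 (q m : ℕ) (hq : IsPrimePow q) (hm : 0 < m)
    (F E : Type*) [Field F] [Field E] [Fintype F] [Fintype E] [Algebra F E]
    (hF : Fintype.card F = q) (hE : Fintype.card E = q ^ m)
    (θ : E →ₐ[F] Matrix (Fin m) (Fin m) F) (hθ : Function.Injective θ)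
    (γ : E) (hγ : orderOf γ = q ^ m - 1)
    (a b : ℕ)
    (hab : ∀ e h : ℕ, e < m → h < m →
      ¬ (a * q ^ e ≡ b * q ^ h [MOD q ^ m - 1])) :
    IsUnit (θ (γ⁻¹ ^ b) ⊗ₖ θ (γ ^ a) - 1) :=
  stmt11_general q m F E hF hE θ γ hγ a b hab
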